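/- Let M = (W, ∅, ⪯, ≡, V) be an IS5-model. If w (⪯;≡) w' (i.e., ∃v, w ⪯ v ≡ w'), then M, w ⊨ ◇φ implies M, w' ⊨ ◇φ, for any μ-formula φ. -/
import Mathlib


/-- Constructive μ-formulas. -/
inductive Fml : Type where
  | prop : ℕ → Fml
  | var : ℕ → Fml
  | bot : Fml
  | top : Fml
  | neg : Fml → Fml
  | and : Fml → Fml → Fml
  | or : Fml → Fml → Fml
  | imp : Fml → Fml → Fml
  | box : Fml → Fml
  | dia : Fml → Fml
  | mu : ℕ → Fml → Fml
  | nu : ℕ → Fml → Fml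

mutual
  /-- `X` occurs only positively in `φ`. -/
  inductive PosIn : ℕ → Fml → Prop where
    | prop {x p} : PosIn x (.prop p)
    | bot {x} : PosIn x .bot
    | top {x} : PosIn x .top
    | var {x} : PosIn x (.var x)
    | varNe {x y} : x ≠ y → PosIn x (.var y)
    | neg {x φ} : NegIn x φ → PosIn x (.neg φ)
    | and {x φ ψ} : PosIn x φ → PosIn x ψ → PosIn x (.and φ ψ)
    | or {x φ ψ} : PosIn x φ → PosIn x ψ → PosIn x (.or φ ψ)
    | imp {x φ ψ} : NegIn x φ → PosIn x ψ → PosIn x (.imp φ ψ)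
    | box {x φ} : PosIn x φ → PosIn x (.box φ)
    | dia {x φ} : PosIn x φ → PosIn x (.dia φ)
    | muSelf {x φ} : PosIn x (.mu x φ)
    | mu {x y φ} : x ≠ y → PosIn x φ → PosIn x (.mu y φ)
    | nuSelf {x φ} : PosIn x (.nu x φ)
    | nu {x y φ} : x ≠ y → PosIn x φ → PosIn x (.nu y φ)
  /-- `X` occurs only negatively in `φ`. -/
  inductive NegIn : ℕ → Fml → Prop where
    | prop {x p} : NegIn x (.prop p)
    | bot {x} : NegIn x .bot
    | top {x} : NegIn x .top
    | varNe {x y} : x ≠ y → NegIn x (.var y)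
    | neg {x φ} : PosIn x φ → NegIn x (.neg φ)
    | and {x φ ψ} : NegIn x φ → NegIn x ψ → NegIn x (.and φ ψ)
    | or {x φ ψ} : NegIn x φ → NegIn x ψ → NegIn x (.or φ ψ)
    | imp {x φ ψ} : PosIn x φ → NegIn x ψ → NegIn x (.imp φ ψ)
    | box {x φ} : NegIn x φ → NegIn x (.box φ)
    | dia {x φ} : NegIn x φ → NegIn x (.dia φ)
    | muSelf {x φ} : NegIn x (.mu x φ)
    | mu {x y φ} : x ≠ y → NegIn x φ → NegIn x (.mu y φ)
    | nuSelf {x φ} : NegIn x (.nu x φ)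
    | nu {x y φ} : x ≠ y → NegIn x φ → NegIn x (.nu y φ)
end

/-- Bi-relational CK-models of Mendler and de Paiva. -/
structure CKModel (W : Type) where
  fall : Set W
  le : W → W → Prop
  R : W → W → Prop
  V : ℕ → Set W
  le_refl : ∀ w, le w w
  le_trans : ∀ {w v u}, le w v → le v u → le w u
  persist : ∀ p {w v}, le w v → w ∈ V p → v ∈ V p
  fall_V : ∀ p, fall ⊆ V p
  fall_le : ∀ {w v}, w ∈ fall → le w v → v ∈ fall
  fall_R : ∀ {w v}, w ∈ fall → R w v → v ∈ fall

/-- Bi-relational semantics with an environment `ρ` for the variables.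
Fixed points are interpreted via Knaster–Tarski. -/
def sem {W : Type} (M : CKModel W) : (ℕ → Set W) → Fml → Set W
  | ρ, .prop p => M.V p
  | ρ, .var x => ρ x
  | _, .bot => M.fall
  | _, .top => Set.univ
  | ρ, .neg φ => {w | ∀ v, M.le w v → v ∉ sem M ρ φ}
  | ρ, .and φ ψ => sem M ρ φ ∩ sem M ρ ψ
  | ρ, .or φ ψ => sem M ρ φ ∪ sem M ρ ψ
  | ρ, .imp φ ψ => {w | ∀ v, M.le w v → v ∈ sem M ρ φ → v ∈ sem M ρ ψ}
  | ρ, .box φ => {w | ∀ v u, M.le w v → M.R v u → u ∈ sem M ρ φ}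
  | ρ, .dia φ => {w | ∀ v, M.le w v → ∃ u, M.R v u ∧ u ∈ sem M ρ φ}
  | ρ, .mu x φ => ⋂₀ {A | sem M (Function.update ρ x A) φ ⊆ A}
  | ρ, .nu x φ => ⋃₀ {A | A ⊆ sem M (Function.update ρ x A) φ}

/-- IS5-models: CK-models with no fallible worlds, whose modal relation is an
equivalence relation that is forward and backward confluent with `⪯`. -/
structure IS5Model (W : Type) extends CKModel W where
  fall_empty : fall = ∅
  R_equiv : Equivalence R
  forward : ∀ {w v w'}, R w v → le w w' → ∃ v', le v v' ∧ R w' v'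
  backward : ∀ {w v v'}, R w v → le v v' → ∃ w', le w w' ∧ R w' v'

/-- Ordinal-indexed approximants of a least fixed point. -/
noncomputable def muApprox {W : Type} (Γ : Set W → Set W) (α : Ordinal) : Set W :=
  Ordinal.limitRecOn α ∅ (fun _ A => Γ A) (fun o _ ih => ⋃ β : Set.Iio o, ih β.1 β.2)

/-- Ordinal-indexed approximants of a greatest fixed point. -/
noncomputable def nuApprox {W : Type} (Γ : Set W → Set W) (α : Ordinal) : Set W :=
  Ordinal.limitRecOn α Set.univ (fun _ A => Γ A) (fun o _ ih => ⋂ β : Set.Iio o, ih β.1 β.2)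

/-- `φ` is a modal formula: it contains no fixed-point operators. -/
def NoFix : Fml → Prop
  | .mu _ _ => False
  | .nu _ _ => False
  | .neg φ => NoFix φ
  | .box φ => NoFix φ
  | .dia φ => NoFix φ
  | .and φ ψ => NoFix φ ∧ NoFix ψ
  | .or φ ψ => NoFix φ ∧ NoFix ψ
  | .imp φ ψ => NoFix φ ∧ NoFix ψ
  | _ => True

/-- Number of free occurrences of the variable `x` in a formula. -/
def varCount (x : ℕ) : Fml → ℕ
  | .var y => if y = x then 1 else 0
  | .neg φ => varCount x φ
  | .box φ => varCount x φ
  | .dia φ => varCount x φ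
  | .and φ ψ => varCount x φ + varCount x ψ
  | .or φ ψ => varCount x φ + varCount x ψ
  | .imp φ ψ => varCount x φ + varCount x ψ
  | .mu y φ => if y = x then 0 else varCount x φ
  | .nu y φ => if y = x then 0 else varCount x φ
  | _ => 0

/-- A formula is closed iff it has no free variables. -/
def Closed (φ : Fml) : Prop := ∀ x, varCount x φ = 0

/-- Well-formedness: every fixed-point operator binds a positive variable. -/
def WF : Fml → Prop
  | .mu x φ => PosIn x φ ∧ WF φ
  | .nu x φ => PosIn x φ ∧ WF φ
  | .neg φ => WF φ
  | .box φ => WF φ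
  | .dia φ => WF φ
  | .and φ ψ => WF φ ∧ WF ψ
  | .or φ ψ => WF φ ∧ WF ψ
  | .imp φ ψ => WF φ ∧ WF ψ
  | _ => True

/-- Substitution of the formula `σ` for the free occurrences of the variable `x`. -/
def subst (x : ℕ) (σ : Fml) : Fml → Fml
  | .var y => if y = x then σ else .var y
  | .prop p => .prop p
  | .bot => .bot
  | .top => .top
  | .neg φ => .neg (subst x σ φ)
  | .and φ ψ => .and (subst x σ φ) (subst x σ ψ)
  | .or φ ψ => .or (subst x σ φ) (subst x σ ψ)
  | .imp φ ψ => .imp (subst x σ φ) (subst x σ ψ)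
  | .box φ => .box (subst x σ φ)
  | .dia φ => .dia (subst x σ φ)
  | .mu y φ => if y = x then .mu y φ else .mu y (subst x σ φ)
  | .nu y φ => if y = x then .nu y φ else .nu y (subst x σ φ)

def Fml.iff (φ ψ : Fml) : Fml := .and (.imp φ ψ) (.imp ψ φ)

/-- The axioms of μIS5: intuitionistic axioms, the modal axioms
K□, K◇, FS, DP, N, T, 4, 5, and the fixed-point axioms νFP and μFP. -/
inductive Ax : Fml → Prop where
  | k1 (φ ψ) : Ax (.imp φ (.imp ψ φ))
  | k2 (φ ψ χ) : Ax (.imp (.imp φ (.imp ψ χ)) (.imp (.imp φ ψ) (.imp φ χ)))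
  | andI (φ ψ) : Ax (.imp φ (.imp ψ (.and φ ψ)))
  | andE1 (φ ψ) : Ax (.imp (.and φ ψ) φ)
  | andE2 (φ ψ) : Ax (.imp (.and φ ψ) ψ)
  | orI1 (φ ψ) : Ax (.imp φ (.or φ ψ))
  | orI2 (φ ψ) : Ax (.imp ψ (.or φ ψ))
  | orE (φ ψ χ) : Ax (.imp (.imp φ χ) (.imp (.imp ψ χ) (.imp (.or φ ψ) χ)))
  | botE (φ) : Ax (.imp .bot φ)
  | topI : Ax .top
  | negI (φ) : Ax (.imp (.imp φ .bot) (.neg φ))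
  | negE (φ) : Ax (.imp (.neg φ) (.imp φ .bot))
  | kBox (φ ψ) : Ax (.imp (.box (.imp φ ψ)) (.imp (.box φ) (.box ψ)))
  | kDia (φ ψ) : Ax (.imp (.box (.imp φ ψ)) (.imp (.dia φ) (.dia ψ)))
  | fs (φ ψ) : Ax (.imp (.imp (.dia φ) (.box ψ)) (.box (.imp φ ψ)))
  | dp (φ ψ) : Ax (.imp (.dia (.or φ ψ)) (.or (.dia φ) (.dia ψ)))
  | n : Ax (.neg (.dia .bot))
  | t1 (φ) : Ax (.imp (.box φ) φ)
  | t2 (φ) : Ax (.imp φ (.dia φ))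
  | four1 (φ) : Ax (.imp (.box φ) (.box (.box φ)))
  | four2 (φ) : Ax (.imp (.dia (.dia φ)) (.dia φ))
  | five1 (φ) : Ax (.imp (.dia φ) (.box (.dia φ)))
  | five2 (φ) : Ax (.imp (.dia (.box φ)) (.box φ))
  | nuFP (x φ) : PosIn x φ → Ax (.imp (.nu x φ) (subst x (.nu x φ) φ))
  | muFP (x φ) : PosIn x φ → Ax (.imp (subst x (.mu x φ) φ) (.mu x φ))

/-- Provability in μIS5: closure of the axioms under modus ponens,
necessitation, and the two fixed-point induction rules. -/
inductive Prov : Fml → Prop where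
  | ax {φ} : Ax φ → Prov φ
  | mp {φ ψ} : Prov (.imp φ ψ) → Prov φ → Prov ψ
  | nec {φ} : Prov φ → Prov (.box φ)
  | nuInd {x φ ψ} : PosIn x φ → Prov (.imp ψ (subst x ψ φ)) → Prov (.imp ψ (.nu x φ))
  | muInd {x φ ψ} : PosIn x φ → Prov (.imp (subst x ψ φ) ψ) → Prov (.imp (.mu x φ) ψ)

/-- μIS5-theories: contain all axioms, closed under modus ponens,
consistent, and with the disjunction property. -/
structure IsTheory (Γ : Set Fml) : Prop where
  ax_mem : ∀ φ, Ax φ → φ ∈ Γ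
  mp_closed : ∀ φ ψ, Fml.imp φ ψ ∈ Γ → φ ∈ Γ → ψ ∈ Γ
  bot_not_mem : Fml.bot ∉ Γ
  disj : ∀ φ ψ, Fml.or φ ψ ∈ Γ → φ ∈ Γ ∨ ψ ∈ Γ

def diaSet (Γ : Set Fml) : Set Fml := {φ | Fml.dia φ ∈ Γ}
def boxSet (Γ : Set Fml) : Set Fml := {φ | Fml.box φ ∈ Γ}

/-- The canonical modal relation on μIS5-theories. -/
def equivC (Γ Δ : Set Fml) : Prop := Δ ⊆ diaSet Γ ∧ boxSet Γ ⊆ Δ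

/-- In an IS5-model, truth of `◇φ` propagates along `⪯;≡`. -/
theorem dia_persists_along_comp {W : Type} (M : IS5Model W) (φ : Fml)
    (ρ : ℕ → Set W) (w w' : W) (h : ∃ v, M.le w v ∧ M.R v w')
    (hw : w ∈ sem M.toCKModel ρ (.dia φ)) :
    w' ∈ sem M.toCKModel ρ (.dia φ) := by
  obtain ⟨v, hwv, hvw'⟩ := h
  intro u hu
  obtain ⟨v', hvv', hv'u⟩ := M.backward hvw' hu
  obtain ⟨t, ht, htφ⟩ := hw v' (M.le_trans hwv hvv')
  exact ⟨t, M.R_equiv.trans (M.R_equiv.symm hv'u) ht, htφ⟩
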